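/- arXiv:2008.13235 — 4 statements merged into one kernel-verified Lean document; each statement's English description precedes it below -/
import Mathlib

section
/- Let A, B be disjoint finite nonempty point sets in Euclidean space with |A| ≥ |B|, and let S ⊆ A with |S| > (3/7)|A|. Suppose d(ρ(S),ρ(A))²/d(ρ(S),ρ(B))² ≥ 49/121. Then Δ₁(A∖S) + Δ₁(S ∪ B) < Δ₁(A) + Δ₁(B); i.e., the partition (A∖S, S∪B) has strictly smaller 2-means cost than (A,B). (Assume S ≠ A and d(ρ(S),ρ(A)) > 0.) -/
open Finset
open scoped Classical

noncomputable def centroid9 {d : ℕ} (S : Finset (EuclideanSpace ℝ (Fin d))) :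
    EuclideanSpace ℝ (Fin d) := (S.card : ℝ)⁻¹ • ∑ v ∈ S, v

noncomputable def oneMeans9 {d : ℕ} (S : Finset (EuclideanSpace ℝ (Fin d))) : ℝ :=
  ∑ u ∈ S, dist u (centroid9 S) ^ 2

/-!
By the parallel-axis identity, splitting `A` into `A \ S` and `S` lowers the cost by
`|S||A|/|A \ S| · d(ρ(S), ρ(A))²`, while merging `S` into `B` raises it by
`|S||B|/(|S| + |B|) · d(ρ(S), ρ(B))²`. Since `|S| > (3/7)|A| ≥ (3/7)|B|`, the first weight is more
than `(7/4)|S|` and the second at most `(7/10)|S|`, and `(7/10)·(121/49) < 7/4` closes the gap left by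
the distance ratio.
-/

section Centroid

variable {d : ℕ}

theorem card_smul_centroid9 (S : Finset (EuclideanSpace ℝ (Fin d))) :
    (S.card : ℝ) • centroid9 S = ∑ v ∈ S, v := by
  rcases S.eq_empty_or_nonempty with rfl | hS
  · simp
  · rw [centroid9, smul_smul, mul_inv_cancel₀ (by exact_mod_cast hS.card_pos.ne'), one_smul]

theorem sum_dist_sq_eq_oneMeans9_add (S : Finset (EuclideanSpace ℝ (Fin d)))
    (p : EuclideanSpace ℝ (Fin d)) :
    ∑ u ∈ S, dist u p ^ 2 = oneMeans9 S + S.card * dist (centroid9 S) p ^ 2 := by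
  set ρ := centroid9 S
  have hcross : ∑ u ∈ S, inner ℝ (u - ρ) (ρ - p) = 0 := by
    rw [← sum_inner, sum_sub_distrib, sum_const, ← card_smul_centroid9, ← Nat.cast_smul_eq_nsmul ℝ,
      sub_self, inner_zero_left]
  have hsplit : ∀ u, dist u p ^ 2 = dist u ρ ^ 2 + 2 * inner ℝ (u - ρ) (ρ - p) + dist ρ p ^ 2 := by
    intro u
    rw [dist_eq_norm, dist_eq_norm, dist_eq_norm, ← norm_add_sq_real, sub_add_sub_cancel]
  rw [sum_congr rfl fun u _ => hsplit u, sum_add_distrib, sum_add_distrib, ← mul_sum, hcross,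
    sum_const, nsmul_eq_mul, oneMeans9]
  ring

theorem card_smul_centroid9_union {X Y : Finset (EuclideanSpace ℝ (Fin d))} (h : Disjoint X Y) :
    ((X.card : ℝ) + Y.card) • centroid9 (X ∪ Y)
      = (X.card : ℝ) • centroid9 X + (Y.card : ℝ) • centroid9 Y := by
  rw [card_smul_centroid9 X, card_smul_centroid9 Y, ← sum_union h, ← card_smul_centroid9,
    card_union_of_disjoint h, Nat.cast_add]

theorem card_mul_dist_centroid9_union {X Y : Finset (EuclideanSpace ℝ (Fin d))}
    (h : Disjoint X Y) :
    ((X.card : ℝ) + Y.card) * dist (centroid9 X) (centroid9 (X ∪ Y))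
      = Y.card * dist (centroid9 X) (centroid9 Y) := by
  have hvec : ((X.card : ℝ) + Y.card) • (centroid9 X - centroid9 (X ∪ Y))
      = (Y.card : ℝ) • (centroid9 X - centroid9 Y) := by
    rw [smul_sub, card_smul_centroid9_union h, smul_sub, add_smul]
    abel
  have := congrArg norm hvec
  rwa [norm_smul, norm_smul, Real.norm_of_nonneg (by positivity),
    Real.norm_of_nonneg (by positivity), ← dist_eq_norm, ← dist_eq_norm] at this

theorem oneMeans9_union {X Y : Finset (EuclideanSpace ℝ (Fin d))} (h : Disjoint X Y) :
    oneMeans9 (X ∪ Y) = oneMeans9 X + oneMeans9 Y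
      + X.card * Y.card / (X.card + Y.card) * dist (centroid9 X) (centroid9 Y) ^ 2 := by
  set n : ℝ := X.card + Y.card
  have hX := card_mul_dist_centroid9_union h
  have hY := card_mul_dist_centroid9_union h.symm
  rw [union_comm Y X, add_comm (Y.card : ℝ), dist_comm (centroid9 Y) (centroid9 X)] at hY
  rw [oneMeans9, sum_union h, sum_dist_sq_eq_oneMeans9_add, sum_dist_sq_eq_oneMeans9_add]
  rcases eq_or_ne n 0 with hn | hn
  · obtain ⟨hx, hy⟩ := (add_eq_zero_iff_of_nonneg (Nat.cast_nonneg _) (Nat.cast_nonneg _)).1 hn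
    simp [hx, hy]
  · rw [eq_div_of_mul_eq hn ((mul_comm _ _).trans hX),
      eq_div_of_mul_eq hn ((mul_comm _ _).trans hY)]
    field_simp
    ring

theorem oneMeans9_eq_sdiff_add {S A : Finset (EuclideanSpace ℝ (Fin d))} (h : S ⊆ A) :
    oneMeans9 A = oneMeans9 (A \ S) + oneMeans9 S
      + S.card * A.card / (A \ S).card * dist (centroid9 S) (centroid9 A) ^ 2 := by
  have hdisj : Disjoint (A \ S) S := sdiff_disjoint
  have hA : A \ S ∪ S = A := sdiff_union_of_subset h
  have hcard : ((A \ S).card : ℝ) + S.card = A.card := by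
    rw [← Nat.cast_add, ← card_union_of_disjoint hdisj, hA]
  have hdist := card_mul_dist_centroid9_union hdisj.symm
  rw [union_comm, hA, add_comm, hcard] at hdist
  conv_lhs => rw [← hA, oneMeans9_union hdisj, hcard, dist_comm]
  rcases eq_or_ne ((A \ S).card : ℝ) 0 with hr | hr
  · -- Both weights vanish: `0 * _` on the left and `_ / 0 = 0` on the right.
    simp [hr]
  · rw [eq_div_of_mul_eq hr ((mul_comm _ _).trans hdist.symm)]
    field_simp

end Centroid

theorem mul_div_add_mul_lt_mul_div_sub_mul {a b s x y : ℝ} (hb : 0 ≤ b) (hba : b ≤ a)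
    (hs : 3 / 7 * a < s) (hsa : s < a) (hy : 0 ≤ y) (hratio : 49 / 121 ≤ x / y) :
    s * b / (s + b) * y < s * a / (a - s) * x := by
  have hs0 : 0 < s := by linarith
  -- `x / 0 = 0`, so the ratio bound excludes `y = 0`.
  have hy0 : 0 < y := hy.lt_of_ne fun h => by norm_num [← h] at hratio
  have hxy : y ≤ 121 / 49 * x := by
    rw [le_div_iff₀ hy0] at hratio
    linarith
  have hx0 : 0 < x := by linarith
  have hB : b / (s + b) ≤ 7 / 10 := by
    rw [div_le_iff₀ (by linarith)]
    linarith
  have hA : 7 / 4 < a / (a - s) := by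
    rw [lt_div_iff₀ (by linarith)]
    linarith
  calc s * b / (s + b) * y = s * (b / (s + b) * y) := by ring
    _ ≤ s * (7 / 10 * (121 / 49 * x)) := by gcongr
    _ < s * (7 / 4 * x) := mul_lt_mul_of_pos_left (by linarith) hs0
    _ < s * (a / (a - s) * x) := by gcongr
    _ = s * a / (a - s) * x := by ring

theorem move_S_improves_two_means_general {k : ℕ}
    (A B S : Finset (EuclideanSpace ℝ (Fin k)))
    (hdisj : Disjoint A B)
    (hKcard : (B.card : ℝ) ≤ A.card)
    (hSA : S ⊆ A) (hSne : S ≠ A)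
    (hScard : (3 / 7 : ℝ) * A.card < S.card)
    (hratio : (49 : ℝ) / 121 ≤
      dist (centroid9 S) (centroid9 A) ^ 2 / dist (centroid9 S) (centroid9 B) ^ 2) :
    oneMeans9 (A \ S) + oneMeans9 (S ∪ B) < oneMeans9 A + oneMeans9 B := by
  have hcard : (S.card : ℝ) < A.card := by
    exact_mod_cast card_lt_card (ssubset_of_subset_of_ne hSA hSne)
  have hgain := mul_div_add_mul_lt_mul_div_sub_mul (Nat.cast_nonneg _) hKcard hScard hcard
    (sq_nonneg _) hratio
  rw [oneMeans9_eq_sdiff_add hSA, oneMeans9_union (hdisj.mono_left hSA),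
    card_sdiff_of_subset hSA, Nat.cast_sub (card_le_card hSA)]
  linarith

/-- Moving the large low-revenue set `S` from `A` to `B` strictly improves the
2-means cost. -/
theorem move_S_improves_two_means {k : ℕ}
    (A B S : Finset (EuclideanSpace ℝ (Fin k)))
    (hA : A.Nonempty) (hB : B.Nonempty) (hdisj : Disjoint A B)
    (hKcard : (B.card : ℝ) ≤ A.card)
    (hSA : S ⊆ A) (hSne : S ≠ A)
    (hScard : (3 / 7 : ℝ) * A.card < S.card)
    (hratio : (49 : ℝ) / 121 ≤
      dist (centroid9 S) (centroid9 A) ^ 2 / dist (centroid9 S) (centroid9 B) ^ 2)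
    (hpos : 0 < dist (centroid9 S) (centroid9 A)) :
    oneMeans9 (A \ S) + oneMeans9 (S ∪ B) < oneMeans9 A + oneMeans9 B :=
  move_S_improves_two_means_general A B S hdisj hKcard hSA hSne hScard hratio
end

section
/- Let V be a finite set of n ≥ 3 points with a metric d. Suppose a quantity R satisfies R = ∑_{triples {i,j,k}⊆V} triR(i,j,k) + 2·∑_{pairs {p,q}⊆V} d(p,q), where each triR(i,j,k) is a sum of two of the three pairwise distances of the triple. Then R > (1/2) · n · ∑_{pairs {p,q}⊆V} d(p,q), assuming ∑_{pairs} d(p,q) > 0. In particular, since the optimal value of the objective ∑_{pairs} d(p,q)·|leaves(T[p∨q])| is at most n·∑_{pairs} d(p,q), R is at least half the optimum. -/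
/-!
Each pair of points lies in exactly `n - 2` triples, so summing the perimeters of all triples
gives `(n - 2)` times the total pairwise distance `W`. By the triangle inequality, a sum of two
sides of a triangle is at least half its perimeter, hence the triple revenues add up to at least
`(n - 2) W / 2`, and `R ≥ (n - 2) W / 2 + 2 W = n W / 2 + W`.
-/

open Finset

section DoubleCounting

variable {X R : Type*} [DecidableEq X] [AddCommMonoid R]

theorem sum_sum_sum_mem_eq_sum_sum_card_smul {V : Finset X} {𝒜 : Finset (Finset X)}
    (h𝒜 : ∀ t ∈ 𝒜, t ⊆ V) (f : X → X → R) :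
    ∑ t ∈ 𝒜, ∑ p ∈ t, ∑ q ∈ t, f p q
      = ∑ p ∈ V, ∑ q ∈ V, #{t ∈ 𝒜 | {p, q} ⊆ t} • f p q := by
  simp_rw [← sum_product' (f := f),
    ← sum_product' (f := fun p q => #{t ∈ 𝒜 | {p, q} ⊆ t} • f p q)]
  rw [sum_comm' (t' := V ×ˢ V) (s' := fun x : X × X => {t ∈ 𝒜 | {x.1, x.2} ⊆ t})]
  · simp only [sum_const]
  · rintro t ⟨p, q⟩
    simp only [mem_product, mem_filter, insert_subset_iff, singleton_subset_iff]
    constructor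
    · rintro ⟨ht, hp, hq⟩
      exact ⟨⟨ht, hp, hq⟩, h𝒜 t ht hp, h𝒜 t ht hq⟩
    · rintro ⟨⟨ht, hp, hq⟩, -⟩
      exact ⟨ht, hp, hq⟩

theorem card_filter_powersetCard_three_pair_subset {V : Finset X} {p q : X}
    (hp : p ∈ V) (hq : q ∈ V) (hpq : p ≠ q) :
    #{t ∈ V.powersetCard 3 | {p, q} ⊆ t} = #V - 2 := by
  rw [card_filter_powersetCard_subset _ _ _ (insert_subset hp (singleton_subset_iff.2 hq))
    (by rw [card_pair hpq]; omega), card_pair hpq, Nat.choose_one_right]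

theorem sum_powersetCard_three_sum_sum {V : Finset X} {f : X → X → R}
    (hdiag : ∀ p, f p p = 0) :
    ∑ t ∈ V.powersetCard 3, ∑ p ∈ t, ∑ q ∈ t, f p q = (#V - 2) • ∑ p ∈ V, ∑ q ∈ V, f p q := by
  rw [sum_sum_sum_mem_eq_sum_sum_card_smul (fun t ht => (mem_powersetCard.1 ht).1), smul_sum]
  refine sum_congr rfl fun p hp => ?_
  rw [smul_sum]
  refine sum_congr rfl fun q hq => ?_
  rcases eq_or_ne p q with rfl | hpq
  · simp only [hdiag, smul_zero]
  · rw [card_filter_powersetCard_three_pair_subset hp hq hpq]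

end DoubleCounting

section Triangle

variable {X : Type*} {d : X → X → ℝ} {i j k : X}

theorem sum_sum_triple_eq_two_mul [DecidableEq X] (hsymm : ∀ i j, d i j = d j i)
    (hself : ∀ i, d i i = 0) (hij : i ≠ j) (hik : i ≠ k) (hjk : j ≠ k) :
    ∑ p ∈ {i, j, k}, ∑ q ∈ {i, j, k}, d p q = 2 * (d i j + d i k + d j k) := by
  have hsum : ∀ f : X → ℝ, ∑ p ∈ ({i, j, k} : Finset X), f p = f i + (f j + f k) := fun f => by
    rw [sum_insert (by simp [hij, hik]), sum_insert (by simp [hjk]), sum_singleton]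
  simp only [hsum, hself, hsymm j i, hsymm k i, hsymm k j]
  ring

theorem add_add_le_two_mul_of_two_sides (hsymm : ∀ i j, d i j = d j i)
    (htri : ∀ i j k, d i k ≤ d i j + d j k) {r : ℝ}
    (hr : r = d i k + d j k ∨ r = d i j + d j k ∨ r = d i j + d i k) :
    d i j + d i k + d j k ≤ 2 * r := by
  have hij := htri i k j
  have hik := htri i j k
  have hjk := htri j i k
  rw [hsymm k j] at hij
  rw [hsymm j i] at hjk
  rcases hr with rfl | rfl | rfl <;> linarith

end Triangle

open scoped Classical

theorem ckmm_every_tree_half_general {X : Type*} (V : Finset X) (d : X → X → ℝ)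
    (hsymm : ∀ i j : X, d i j = d j i)
    (hself : ∀ i : X, d i i = 0)
    (htri : ∀ i j k : X, d i k ≤ d i j + d j k)
    (triR : Finset X → ℝ)
    (hsel : ∀ t ∈ V.powersetCard 3, ∃ i j k : X,
      i ≠ j ∧ i ≠ k ∧ j ≠ k ∧ t = {i, j, k} ∧
      (triR t = d i k + d j k ∨ triR t = d i j + d j k ∨ triR t = d i j + d i k))
    (R W : ℝ)
    (hW : W = (1 / 2) * ∑ p ∈ V, ∑ q ∈ V, d p q)
    (hWpos : 0 < W)
    (hR : R = (∑ t ∈ V.powersetCard 3, triR t) + 2 * W) :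
    (1 / 2) * V.card * W < R := by
  have hperimeter : ∀ t ∈ V.powersetCard 3, ∑ p ∈ t, ∑ q ∈ t, d p q ≤ 4 * triR t := by
    intro t ht
    obtain ⟨i, j, k, hij, hik, hjk, rfl, hr⟩ := hsel t ht
    rw [sum_sum_triple_eq_two_mul hsymm hself hij hik hjk]
    linarith [add_add_le_two_mul_of_two_sides hsymm htri hr]
  have hcount :
      ∑ t ∈ V.powersetCard 3, ∑ p ∈ t, ∑ q ∈ t, d p q = ((#V - 2 : ℕ) : ℝ) * (2 * W) := by
    rw [sum_powersetCard_three_sum_sum hself, nsmul_eq_mul, hW]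
    ring
  have hcast : (#V : ℝ) - 2 ≤ ((#V - 2 : ℕ) : ℝ) :=
    sub_le_iff_le_add.2 (by exact_mod_cast le_tsub_add)
  have htriples : ((#V : ℝ) - 2) * (2 * W) ≤ 4 * ∑ t ∈ V.powersetCard 3, triR t := by
    rw [mul_sum]
    calc ((#V : ℝ) - 2) * (2 * W) ≤ ∑ t ∈ V.powersetCard 3, ∑ p ∈ t, ∑ q ∈ t, d p q := by
          rw [hcount]; gcongr
      _ ≤ _ := sum_le_sum hperimeter
  rw [hR]
  linarith

/-- Any tree revenue of the CKMM form (triple revenues plus twice the total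
pairwise distance) exceeds half of `n` times the total pairwise distance, and
hence is at least half of the optimum `n·∑ d(p,q)`. -/
theorem ckmm_every_tree_half {X : Type*} (V : Finset X) (d : X → X → ℝ)
    (hnonneg : ∀ i j : X, 0 ≤ d i j)
    (hsymm : ∀ i j : X, d i j = d j i)
    (hself : ∀ i : X, d i i = 0)
    (htri : ∀ i j k : X, d i k ≤ d i j + d j k)
    (hn : 3 ≤ V.card)
    (triR : Finset X → ℝ)
    (hsel : ∀ t ∈ V.powersetCard 3, ∃ i j k : X,
      i ≠ j ∧ i ≠ k ∧ j ≠ k ∧ t = {i, j, k} ∧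
      (triR t = d i k + d j k ∨ triR t = d i j + d j k ∨ triR t = d i j + d i k))
    (R W : ℝ)
    (hW : W = (1 / 2) * ∑ p ∈ V, ∑ q ∈ V, d p q)
    (hWpos : 0 < W)
    (hR : R = (∑ t ∈ V.powersetCard 3, triR t) + 2 * W) :
    (1 / 2) * V.card * W < R :=
  ckmm_every_tree_half_general V d hsymm hself htri triR hsel R W hW hWpos hR
end

section
/- Let a, b, n be positive reals with n ≥ 2, and suppose a sequence satisfies s₀ = n and s_{i+1} ≥ s_i/2 − √(s_i · log s_i) with s_i ≥ 4. If s_{i−1} ≥ n/2^{i−1} − 8·√((n/2^{i−1})·log(n/2^{i−1})), then s_i ≥ n/2^i − 8·√((n/2^i)·log(n/2^i)), provided log(n/2^i) ≥ log 2 and n/2^i is large enough that 5√2·√((n/2^i)(log(n/2^i)+log 2)) ≤ 8√((n/2^i)·log(n/2^i)). -/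
/-!
Put `x = n / 2^i` and `m = 2x = n / 2^(i-1)`, `S = √(m log m)`. The map `t ↦ t/2 - √(t log t)` is
not monotone near `t = 4`, but it loses at most `4S` against its value at `m` on the half-line
`t ≥ m - 8S`: below `m` because `√(t log t) ≤ S`, above `m` because the tangent line of `log`
at `m` gives `√(t log t) ≤ (t - m)/2 + 2S`. Hence `s i ≥ x - 5S`, and `5S ≤ 8√(x log x)` is the
technical hypothesis after `log (2x) = log x + log 2`.
-/

open Real

namespace Real

lemma sqrt_mul_log_le_sqrt_mul_log {t m : ℝ} (ht : 1 ≤ t) (h : t ≤ m) :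
    √(t * log t) ≤ √(m * log m) :=
  sqrt_le_sqrt <| mul_le_mul h (log_le_log (by linarith) h) (log_nonneg ht) (by linarith)

lemma log_add_one_le_two_mul_sqrt_mul_log {m : ℝ} (hm : 4 ≤ m) :
    log m + 1 ≤ 2 * √(m * log m) := by
  have hm0 : 0 < m := by linarith
  have hlog : 1 ≤ log m := by
    rw [le_log_iff_exp_le hm0]
    linarith [exp_one_lt_d9]
  have hlog_sqrt : log m ≤ 2 * √m - 2 := by
    have := log_le_sub_one_of_pos (sqrt_pos.mpr hm0)
    rw [log_sqrt hm0.le] at this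
    linarith
  have hsqrt : √m ≤ √(m * log m) := sqrt_le_sqrt (le_mul_of_one_le_right hm0.le hlog)
  linarith

lemma log_le_log_add_div_sub_one {t m : ℝ} (ht : 0 < t) (hm : 0 < m) :
    log t ≤ log m + t / m - 1 := by
  have := log_le_sub_one_of_pos (div_pos ht hm)
  rw [log_div ht.ne' hm.ne'] at this
  linarith

lemma sqrt_mul_log_le_half_sub_add {t m : ℝ} (hm : 4 ≤ m) (h : m ≤ t) :
    √(t * log t) ≤ (t - m) / 2 + 2 * √(m * log m) := by
  set S := √(m * log m)
  have hm0 : 0 < m := by linarith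
  have hS : 0 ≤ S := sqrt_nonneg _
  have hS2 : S ^ 2 = m * log m := sq_sqrt (mul_nonneg hm0.le (log_nonneg (by linarith)))
  have hlogS := log_add_one_le_two_mul_sqrt_mul_log hm
  set d := t - m
  have hd0 : 0 ≤ d := by linarith
  rw [sqrt_le_left (by positivity)]
  calc t * log t ≤ t * (log m + t / m - 1) :=
        mul_le_mul_of_nonneg_left (log_le_log_add_div_sub_one (by linarith) hm0) (by linarith)
    _ = m * log m + d * (log m + 1) + d ^ 2 / m := by
        rw [show t = m + d by ring]; field_simp; ring
    _ ≤ S ^ 2 + d * (2 * S) + d ^ 2 / 4 := by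
        rw [hS2]; gcongr
    _ ≤ (d / 2 + 2 * S) ^ 2 := by nlinarith [sq_nonneg S]

lemma half_sub_five_mul_sqrt_mul_log_le {t m : ℝ} (ht : 1 ≤ t) (hm : 4 ≤ m)
    (h : m - 8 * √(m * log m) ≤ t) :
    m / 2 - 5 * √(m * log m) ≤ t / 2 - √(t * log t) := by
  rcases le_total t m with htm | hmt
  · linarith [sqrt_mul_log_le_sqrt_mul_log ht htm]
  · linarith [sqrt_mul_log_le_half_sub_add hm hmt, sqrt_nonneg (m * log m)]

lemma sqrt_two_mul_mul_log_two_mul {x : ℝ} (hx : 0 < x) :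
    √(2 * x * log (2 * x)) = √2 * √(x * (log x + log 2)) := by
  rw [log_mul two_ne_zero hx.ne', ← sqrt_mul zero_le_two]
  congr 1
  ring

end Real

theorem almost_equal_split_induction_general (n : ℝ) (s : ℕ → ℝ) (i : ℕ)
    (hn : 2 ≤ n) (hi : 1 ≤ i)
    (hs4 : 4 ≤ s (i - 1))
    (hrec : s (i - 1) / 2 - Real.sqrt (s (i - 1) * Real.log (s (i - 1))) ≤ s i)
    (hprev : n / 2 ^ (i - 1) -
        8 * Real.sqrt ((n / 2 ^ (i - 1)) * Real.log (n / 2 ^ (i - 1)))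
      ≤ s (i - 1))
    (hlog : Real.log 2 ≤ Real.log (n / 2 ^ i))
    (htech : 5 * Real.sqrt 2 *
        Real.sqrt ((n / 2 ^ i) * (Real.log (n / 2 ^ i) + Real.log 2))
      ≤ 8 * Real.sqrt ((n / 2 ^ i) * Real.log (n / 2 ^ i))) :
    n / 2 ^ i - 8 * Real.sqrt ((n / 2 ^ i) * Real.log (n / 2 ^ i)) ≤ s i := by
  obtain ⟨j, rfl⟩ : ∃ j, i = j + 1 := ⟨i - 1, by omega⟩
  simp only [Nat.add_sub_cancel] at hs4 hrec hprev
  have hm : n / 2 ^ j = 2 * (n / 2 ^ (j + 1)) := by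
    rw [pow_succ]; field_simp
  set x := n / 2 ^ (j + 1)
  have hx : 0 < x := by positivity
  have hx2 : 2 ≤ x := (log_le_log_iff two_pos hx).mp hlog
  rw [hm] at hprev
  have key := half_sub_five_mul_sqrt_mul_log_le (by linarith) (by linarith) hprev
  rw [mul_div_cancel_left₀ x two_ne_zero, sqrt_two_mul_mul_log_two_mul hx] at key
  linarith

/-- Inductive step for cluster sizes under almost-equal random splits:
halving with additive deviation `√(s log s)` keeps `s i` within
`8√((n/2^i)·log(n/2^i))` of `n/2^i`. -/
theorem almost_equal_split_induction (n : ℝ) (s : ℕ → ℝ) (i : ℕ)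
    (hn : 2 ≤ n) (hi : 1 ≤ i) (hs0 : s 0 = n)
    (hs4 : 4 ≤ s (i - 1))
    (hrec : s (i - 1) / 2 - Real.sqrt (s (i - 1) * Real.log (s (i - 1))) ≤ s i)
    (hprev : n / 2 ^ (i - 1) -
        8 * Real.sqrt ((n / 2 ^ (i - 1)) * Real.log (n / 2 ^ (i - 1)))
      ≤ s (i - 1))
    (hlog : Real.log 2 ≤ Real.log (n / 2 ^ i))
    (htech : 5 * Real.sqrt 2 *
        Real.sqrt ((n / 2 ^ i) * (Real.log (n / 2 ^ i) + Real.log 2))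
      ≤ 8 * Real.sqrt ((n / 2 ^ i) * Real.log (n / 2 ^ i))) :
    n / 2 ^ i - 8 * Real.sqrt ((n / 2 ^ i) * Real.log (n / 2 ^ i)) ≤ s i :=
  almost_equal_split_induction_general n s i hn hi hs4 hrec hprev hlog htech
end

section
/- Let V be a finite set with a symmetric nonnegative weight function w satisfying the triangle inequality (w is a metric), |V| = n ≥ 3, and total weight W = ∑_{pairs {p,q}⊆V} w(p,q) > 0. Any quantity of the form C = ∑_{triples {i,j,k}} triC(i,j,k) + 2W, where each triC(i,j,k) is a sum of two of the three pairwise weights of the triple, is at most 2·((1/2)·n·W) ≤ 2·C' for any other such quantity C'. Concretely: every such C satisfies (n/2)·W < C ≤ n·W, hence any two such quantities are within a factor 2 of each other. -/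
open Finset
open scoped Classical

lemma count_pairs_aux {X : Type*} [DecidableEq X] (V : Finset X) {p q : X}
    (hp : p ∈ V) (hq : q ∈ V) (hpq : p ≠ q) :
    ((V.powersetCard 3).filter (fun t => p ∈ t ∧ q ∈ t)).card = V.card - 2 := by
  have himg : (V.powersetCard 3).filter (fun t => p ∈ t ∧ q ∈ t)
      = (V \ {p, q}).image (fun x => insert p (insert q {x})) := by
    ext t
    simp only [mem_filter, mem_powersetCard, mem_image, mem_sdiff, mem_insert, mem_singleton]
    constructor
    · rintro ⟨⟨htV, hcard⟩, hpt, hqt⟩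
      have hsub : ({p, q} : Finset X) ⊆ t := by
        intro x hx
        simp only [mem_insert, mem_singleton] at hx
        rcases hx with rfl | rfl <;> assumption
      have hcard2 : ({p, q} : Finset X).card = 2 := by
        rw [card_insert_of_notMem (by simpa using hpq), card_singleton]
      have h1 : (t \ {p, q}).card = 1 := by
        rw [card_sdiff_of_subset hsub, hcard, hcard2]
      obtain ⟨x, hx⟩ := card_eq_one.mp h1
      have hxmem : x ∈ t \ {p, q} := by rw [hx]; exact mem_singleton_self x
      rw [mem_sdiff, mem_insert, mem_singleton] at hxmem
      refine ⟨x, ⟨htV hxmem.1, hxmem.2⟩, ?_⟩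
      have hu := union_sdiff_of_subset hsub
      rw [hx] at hu
      rw [← hu]
      ext y; simp [or_assoc]
    · rintro ⟨x, ⟨hxV, hxpq⟩, rfl⟩
      push_neg at hxpq
      refine ⟨⟨?_, ?_⟩, by simp, by simp⟩
      · intro y hy
        simp only [mem_insert, mem_singleton] at hy
        rcases hy with rfl | rfl | rfl <;> assumption
      · rw [card_insert_of_notMem (by simp [hpq, Ne.symm hxpq.1]),
          card_insert_of_notMem (by simp [Ne.symm hxpq.2]), card_singleton]
  rw [himg, card_image_of_injOn, card_sdiff_of_subset (by
      intro y hy; simp only [mem_insert, mem_singleton] at hy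
      rcases hy with rfl | rfl <;> assumption),
    card_insert_of_notMem (by simpa using hpq), card_singleton]
  intro x hx y hy hxy
  simp only [coe_sdiff, coe_insert, coe_singleton, Set.mem_diff, Set.mem_insert_iff,
    Set.mem_singleton_iff] at hx hy
  push_neg at hx hy
  have hxy' : insert p (insert q ({x} : Finset X)) = insert p (insert q {y}) := hxy
  have : x ∈ insert p (insert q ({y} : Finset X)) := by rw [← hxy']; simp
  simp only [mem_insert, mem_singleton] at this
  rcases this with rfl | rfl | rfl
  · exact absurd rfl hx.2.1
  · exact absurd rfl hx.2.2
  · rfl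

/-- For a metric weight function, every quantity of the Dasgupta/CKMM form
(sum of triple costs, each a sum of two of the three pairwise weights of the
triple, plus twice the total weight `W`) satisfies `(n/2)·W < C ≤ n·W`; hence
any two such quantities are within a factor `2` of each other. -/
theorem dasgupta_every_tree_two_approx {X : Type*} (V : Finset X) (w : X → X → ℝ)
    (hnonneg : ∀ i j : X, 0 ≤ w i j)
    (hsymm : ∀ i j : X, w i j = w j i)
    (hself : ∀ i : X, w i i = 0)
    (htri : ∀ i j k : X, w i k ≤ w i j + w j k)
    (hn : 3 ≤ V.card)
    (W : ℝ) (hW : W = (1 / 2) * ∑ p ∈ V, ∑ q ∈ V, w p q) (hWpos : 0 < W)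
    (triC triC' : Finset X → ℝ)
    (hsel : ∀ t ∈ V.powersetCard 3, ∃ i j k : X,
      i ≠ j ∧ i ≠ k ∧ j ≠ k ∧ t = {i, j, k} ∧
      (triC t = w i k + w j k ∨ triC t = w i j + w j k ∨ triC t = w i j + w i k))
    (hsel' : ∀ t ∈ V.powersetCard 3, ∃ i j k : X,
      i ≠ j ∧ i ≠ k ∧ j ≠ k ∧ t = {i, j, k} ∧
      (triC' t = w i k + w j k ∨ triC' t = w i j + w j k ∨ triC' t = w i j + w i k))
    (C C' : ℝ)
    (hC : C = (∑ t ∈ V.powersetCard 3, triC t) + 2 * W)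
    (hC' : C' = (∑ t ∈ V.powersetCard 3, triC' t) + 2 * W) :
    ((V.card : ℝ) / 2) * W < C ∧ C ≤ (V.card : ℝ) * W ∧ C ≤ 2 * C' := by
  set Q : Finset X → ℝ := fun t => ∑ p ∈ t, ∑ q ∈ t, w p q with hQdef
  have hkey : ∀ t ∈ V.powersetCard 3,
      Q t = ∑ p ∈ V, ∑ q ∈ V, if p ∈ t ∧ q ∈ t then w p q else 0 := by
    intro t ht
    rw [mem_powersetCard] at ht
    have h : ∑ p ∈ V, ∑ q ∈ V, (if p ∈ t ∧ q ∈ t then w p q else 0)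
        = ∑ p ∈ V ∩ t, ∑ q ∈ V ∩ t, w p q := by
      rw [← sum_ite_mem]
      refine sum_congr rfl fun p _ => ?_
      by_cases hp : p ∈ t
      · simp only [hp, true_and, if_true]
        rw [← sum_ite_mem]
      · simp [hp]
    rw [h, inter_eq_right.mpr ht.1]
  have htotal : ∑ t ∈ V.powersetCard 3, Q t = ((V.card : ℝ) - 2) * (2 * W) := by
    rw [sum_congr rfl hkey, sum_comm]
    have h : ∀ p ∈ V, ∑ t ∈ V.powersetCard 3, ∑ q ∈ V, (if p ∈ t ∧ q ∈ t then w p q else 0)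
        = ∑ q ∈ V, ((V.card : ℝ) - 2) * w p q := by
      intro p hp
      rw [sum_comm]
      refine sum_congr rfl fun q hq => ?_
      rw [← sum_filter, sum_const, nsmul_eq_mul]
      by_cases hpq : p = q
      · subst hpq
        rw [hself p, mul_zero, mul_zero]
      · rw [count_pairs_aux V hp hq hpq, Nat.cast_sub (by omega)]
        norm_num
    rw [sum_congr rfl h, hW]
    simp only [← mul_sum]
    ring
  have hbound : ∀ (f : Finset X → ℝ),
      (∀ t ∈ V.powersetCard 3, ∃ i j k : X,
        i ≠ j ∧ i ≠ k ∧ j ≠ k ∧ t = {i, j, k} ∧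
        (f t = w i k + w j k ∨ f t = w i j + w j k ∨ f t = w i j + w i k)) →
      (((V.card : ℝ) - 2) / 2) * W ≤ ∑ t ∈ V.powersetCard 3, f t ∧
      ∑ t ∈ V.powersetCard 3, f t ≤ ((V.card : ℝ) - 2) * W := by
    intro f hf
    have hpt : ∀ t ∈ V.powersetCard 3, (1/4) * Q t ≤ f t ∧ f t ≤ (1/2) * Q t := by
      intro t ht
      obtain ⟨i, j, k, hij, hik, hjk, rfl, hcase⟩ := hf t ht
      have hQt : Q ({i, j, k} : Finset X) = 2 * (w i j + w i k + w j k) := by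
        have h1 : i ∉ ({j, k} : Finset X) := by simp [hij, hik]
        have h2 : j ∉ ({k} : Finset X) := by simp [hjk]
        simp only [hQdef]
        rw [show ({i, j, k} : Finset X) = insert i (insert j {k}) from rfl]
        rw [sum_insert h1, sum_insert h2, sum_singleton,
          sum_insert h1, sum_insert h2, sum_singleton,
          sum_insert h1, sum_insert h2, sum_singleton,
          sum_insert h1, sum_insert h2, sum_singleton]
        rw [hself i, hself j, hself k, hsymm j i, hsymm k i, hsymm k j]
        ring
      have t1 : w i j ≤ w i k + w j k := by
        have h := htri i k j; rw [hsymm k j] at h; linarith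
      have t2 : w i k ≤ w i j + w j k := htri i j k
      have t3 : w j k ≤ w i j + w i k := by
        have h := htri j i k; rw [hsymm j i] at h; linarith
      rw [hQt]
      rcases hcase with h | h | h <;> rw [h] <;>
        constructor <;> linarith [hnonneg i j, hnonneg i k, hnonneg j k]
    constructor
    · calc (((V.card : ℝ) - 2) / 2) * W
          = (1/4) * (((V.card : ℝ) - 2) * (2 * W)) := by ring
        _ = ∑ t ∈ V.powersetCard 3, (1/4) * Q t := by rw [← mul_sum, htotal]
        _ ≤ ∑ t ∈ V.powersetCard 3, f t := sum_le_sum fun t ht => (hpt t ht).1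
    · calc ∑ t ∈ V.powersetCard 3, f t
          ≤ ∑ t ∈ V.powersetCard 3, (1/2) * Q t := sum_le_sum fun t ht => (hpt t ht).2
        _ = (1/2) * (((V.card : ℝ) - 2) * (2 * W)) := by rw [← mul_sum, htotal]
        _ = ((V.card : ℝ) - 2) * W := by ring
  obtain ⟨hA1, hA2⟩ := hbound triC hsel
  obtain ⟨hB1, hB2⟩ := hbound triC' hsel'
  have hn3 : (3 : ℝ) ≤ (V.card : ℝ) := by exact_mod_cast hn
  refine ⟨by nlinarith, by nlinarith, by nlinarith⟩
end
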